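/- arXiv:2407.03252 — 4 statements merged into one kernel-verified Lean document; each statement's English description precedes it below -/
import Mathlib

section
/- For β > 0 and s ∈ ℝ∖{0}, with a = √(|s|/(2β)), the real part of p₁(is) = √(isβ)/tanh(√(is/β)) equals β·a·(cosh a · sinh a + cos a · sin a)/(sinh²a + sin²a), and the real part of p₂(is) = −√(isβ)/sinh(√(is/β)) equals −β·a·(cos a · sinh a + cosh a · sin a)/(sinh²a + sin²a). -/
open Complex

noncomputable def p1 (β : ℝ) (z : ℂ) : ℂ :=
  (z * (β : ℂ)) ^ ((1:ℂ)/2) / Complex.tanh ((z / (β : ℂ)) ^ ((1:ℂ)/2))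

noncomputable def p2 (β : ℝ) (z : ℂ) : ℂ :=
  -((z * (β : ℂ)) ^ ((1:ℂ)/2)) / Complex.sinh ((z / (β : ℂ)) ^ ((1:ℂ)/2))

open ComplexConjugate

/-! For `s > 0` the principal square roots of `i s β` and `i s / β` are `β a (1 + i)` and
`a (1 + i)`: these square to the right values and have positive real part. The case `s < 0` is
the complex conjugate, because `p1` and `p2` commute with conjugation away from the branch cut.
Writing `w = a (1 + i)`, one has `sinh w = sinh a cos a + i cosh a sin a`,
`cosh w = cosh a cos a + i sinh a sin a` and `|sinh w|² = sinh² a + sin² a`, from which the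
real parts are read off. -/

namespace Complex

lemma conj_cpow_one_div_two_of_re_eq_zero {z : ℂ} (hz : z.re = 0) :
    conj z ^ ((1:ℂ)/2) = conj (z ^ ((1:ℂ)/2)) := by
  have harg : z.arg ≠ Real.pi := fun h ↦ (arg_eq_pi_iff.1 h).1.ne hz
  rw [conj_cpow _ _ harg, map_div₀, map_one, map_ofNat]

lemma I_mul_ofReal_cpow_one_div_two {r : ℝ} (hr : 0 < r) :
    (I * r) ^ ((1:ℂ)/2) = √(r / 2) * (1 + I) := by
  have hsq : ((√(r / 2) * (1 + I) : ℂ)) ^ 2 = I * r := by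
    rw [mul_pow, ← ofReal_pow, Real.sq_sqrt (half_pos hr).le]
    push_cast
    linear_combination (r / 2 : ℂ) * I_sq
  rw [← hsq, one_div, sq_cpow_two_inv]
  simpa using hr

lemma sinh_ofReal_mul_one_add_I (a : ℝ) :
    sinh (a * (1 + I))
      = (Real.sinh a * Real.cos a : ℝ) + (Real.cosh a * Real.sin a : ℝ) * I := by
  rw [mul_one_add, sinh_add, cosh_mul_I, sinh_mul_I]
  push_cast
  ring

lemma cosh_ofReal_mul_one_add_I (a : ℝ) :
    cosh (a * (1 + I))
      = (Real.cosh a * Real.cos a : ℝ) + (Real.sinh a * Real.sin a : ℝ) * I := by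
  rw [mul_one_add, cosh_add, cosh_mul_I, sinh_mul_I]
  push_cast
  ring

lemma normSq_sinh_ofReal_mul_one_add_I (a : ℝ) :
    normSq (sinh (a * (1 + I))) = Real.sinh a ^ 2 + Real.sin a ^ 2 := by
  rw [sinh_ofReal_mul_one_add_I, normSq_add_mul_I]
  linear_combination (Real.sin a ^ 2) * Real.cosh_sq_sub_sinh_sq a
    + Real.sinh a ^ 2 * Real.sin_sq_add_cos_sq a

lemma re_ofReal_mul_one_add_I_div_tanh (c a : ℝ) :
    (c * (1 + I) / tanh (a * (1 + I))).re
      = c * (Real.cosh a * Real.sinh a + Real.cos a * Real.sin a)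
          / (Real.sinh a ^ 2 + Real.sin a ^ 2) := by
  rw [tanh_eq_sinh_div_cosh, div_div_eq_mul_div, div_re, normSq_sinh_ofReal_mul_one_add_I,
    ← add_div, sinh_ofReal_mul_one_add_I, cosh_ofReal_mul_one_add_I]
  congr 1
  simp only [add_re, add_im, mul_re, mul_im, ofReal_re, ofReal_im, I_re, I_im, one_re, one_im]
  linear_combination c * Real.cosh a * Real.sinh a * Real.sin_sq_add_cos_sq a
    + c * Real.cos a * Real.sin a * Real.cosh_sq_sub_sinh_sq a

lemma re_neg_ofReal_mul_one_add_I_div_sinh (c a : ℝ) :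
    (-(c * (1 + I)) / sinh (a * (1 + I))).re
      = -(c * (Real.cos a * Real.sinh a + Real.cosh a * Real.sin a)
          / (Real.sinh a ^ 2 + Real.sin a ^ 2)) := by
  rw [div_re, normSq_sinh_ofReal_mul_one_add_I, ← add_div, ← neg_div, sinh_ofReal_mul_one_add_I]
  congr 1
  simp only [add_re, add_im, mul_re, mul_im, neg_re, neg_im, ofReal_re, ofReal_im, I_re, I_im,
    one_re, one_im]
  ring

lemma I_mul_ofReal_mul_ofReal_cpow_one_div_two {β s : ℝ} (hβ : 0 < β) (hs : 0 < s) :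
    (I * s * β) ^ ((1:ℂ)/2) = (β * √(s / (2 * β)) : ℝ) * (1 + I) := by
  have hsqrt : √(s * β / 2) = β * √(s / (2 * β)) := by
    rw [show s * β / 2 = β ^ 2 * (s / (2 * β)) by field_simp, Real.sqrt_mul (sq_nonneg β),
      Real.sqrt_sq hβ.le]
  rw [mul_assoc, ← ofReal_mul, I_mul_ofReal_cpow_one_div_two (mul_pos hs hβ), hsqrt]

lemma I_mul_ofReal_div_ofReal_cpow_one_div_two {β s : ℝ} (hβ : 0 < β) (hs : 0 < s) :
    (I * s / β) ^ ((1:ℂ)/2) = √(s / (2 * β)) * (1 + I) := by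
  rw [mul_div_assoc, ← ofReal_div, I_mul_ofReal_cpow_one_div_two (div_pos hs hβ), div_div,
    mul_comm β]

end Complex

lemma p1_conj_of_re_eq_zero (β : ℝ) {z : ℂ} (hz : z.re = 0) :
    p1 β (conj z) = conj (p1 β z) := by
  have hmul : conj z * β = conj (z * β) := by simp
  have hdiv : conj z / β = conj (z / β) := by simp
  have hmul_re : (z * β).re = 0 := by simp [hz]
  have hdiv_re : (z / β).re = 0 := by simp [hz]
  simp only [p1, hmul, hdiv, conj_cpow_one_div_two_of_re_eq_zero hmul_re,
    conj_cpow_one_div_two_of_re_eq_zero hdiv_re, tanh_conj, ← map_div₀]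

lemma p2_conj_of_re_eq_zero (β : ℝ) {z : ℂ} (hz : z.re = 0) :
    p2 β (conj z) = conj (p2 β z) := by
  have hmul : conj z * β = conj (z * β) := by simp
  have hdiv : conj z / β = conj (z / β) := by simp
  have hmul_re : (z * β).re = 0 := by simp [hz]
  have hdiv_re : (z / β).re = 0 := by simp [hz]
  simp only [p2, hmul, hdiv, conj_cpow_one_div_two_of_re_eq_zero hmul_re,
    conj_cpow_one_div_two_of_re_eq_zero hdiv_re, sinh_conj, ← map_div₀, ← map_neg]

/-- explicit real parts of p₁(is), p₂(is) for s ≠ 0, where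
a = √(|s|/(2β)). -/
theorem real_parts_on_imaginary_axis
    (β s : ℝ) (hβ : 0 < β) (hs : s ≠ 0) :
    (p1 β (Complex.I * (s : ℂ))).re
        = β * Real.sqrt (|s| / (2 * β))
            * (Real.cosh (Real.sqrt (|s| / (2 * β))) * Real.sinh (Real.sqrt (|s| / (2 * β)))
                + Real.cos (Real.sqrt (|s| / (2 * β))) * Real.sin (Real.sqrt (|s| / (2 * β))))
            / (Real.sinh (Real.sqrt (|s| / (2 * β))) ^ 2
                + Real.sin (Real.sqrt (|s| / (2 * β))) ^ 2)
      ∧ (p2 β (Complex.I * (s : ℂ))).re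
        = -(β * Real.sqrt (|s| / (2 * β))
            * (Real.cos (Real.sqrt (|s| / (2 * β))) * Real.sinh (Real.sqrt (|s| / (2 * β)))
                + Real.cosh (Real.sqrt (|s| / (2 * β))) * Real.sin (Real.sqrt (|s| / (2 * β))))
            / (Real.sinh (Real.sqrt (|s| / (2 * β))) ^ 2
                + Real.sin (Real.sqrt (|s| / (2 * β))) ^ 2)) := by
  wlog hpos : 0 < s generalizing s
  · have h := this (-s) (neg_ne_zero.2 hs) (neg_pos.2 ((not_lt.1 hpos).lt_of_ne hs))
    have hre : (I * (s : ℂ)).re = 0 := by simp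
    have hconj : conj (I * (s : ℂ)) = I * ((-s : ℝ) : ℂ) := by simp
    rwa [abs_neg, ← hconj, p1_conj_of_re_eq_zero β hre, p2_conj_of_re_eq_zero β hre, conj_re,
      conj_re] at h
  rw [abs_of_pos hpos, p1, p2, I_mul_ofReal_mul_ofReal_cpow_one_div_two hβ hpos,
    I_mul_ofReal_div_ofReal_cpow_one_div_two hβ hpos]
  exact ⟨re_ofReal_mul_one_add_I_div_tanh _ _, re_neg_ofReal_mul_one_add_I_div_sinh _ _⟩
end

section
/- For every a > 0, cosh(a) sinh(a) + cos(a) sin(a) > 0; consequently, for every β > 0 and s ∈ ℝ∖{0}, Re p₁(is) > 0 where p₁(λ) = √(λβ)/tanh(√(λ/β)). -/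
open Complex

open ComplexConjugate

/-! Put `v = (is/β)^{1/2}`. Then `p₁(is) = β · v / tanh v`, and `v` lies on a diagonal:
`|Im v| = Re v = a > 0`. For such `v`, `Re (v / tanh v)` has the sign of
`Re (v cosh v · conj (sinh v)) = a (cosh a sinh a + cos a sin a)`. -/

theorem Real.cosh_mul_sinh_add_cos_mul_sin_pos {a : ℝ} (ha : 0 < a) :
    0 < Real.cosh a * Real.sinh a + Real.cos a * Real.sin a := by
  have hsin : |Real.sin a| < Real.sinh a :=
    (Real.abs_sin_le_abs.trans_eq (abs_of_pos ha)).trans_lt (Real.self_lt_sinh_iff.2 ha)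
  have hcosh : 1 < Real.cosh a := Real.one_lt_cosh.2 ha.ne'
  have : -(Real.cos a * Real.sin a) < Real.cosh a * Real.sinh a :=
    calc -(Real.cos a * Real.sin a) ≤ |Real.cos a| * |Real.sin a| := by
          rw [← abs_mul]; exact neg_le_abs _
      _ ≤ 1 * |Real.sin a| := by gcongr; exact Real.abs_cos_le_one a
      _ < Real.cosh a * Real.sinh a := by gcongr
  linarith

namespace Complex

theorem re_mul_cosh_mul_conj_sinh (w : ℂ) :
    (w * cosh w * conj (sinh w)).re
      = w.re * (Real.cosh w.re * Real.sinh w.re) + w.im * (Real.cos w.im * Real.sin w.im) := by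
  obtain ⟨x, y, rfl⟩ : ∃ x y : ℝ, w = x + y * I := ⟨w.re, w.im, (re_add_im w).symm⟩
  rw [cosh_add, sinh_add, cosh_mul_I, sinh_mul_I, ← ofReal_cosh, ← ofReal_sinh, ← ofReal_cos,
    ← ofReal_sin]
  simp only [map_add, map_mul, conj_ofReal, conj_I, mul_re, mul_im, add_re, add_im, ofReal_re,
    ofReal_im, I_re, I_im, neg_re, neg_im, mul_zero, mul_one, sub_zero, zero_add, add_zero]
  linear_combination (x * Real.cosh x * Real.sinh x) * Real.sin_sq_add_cos_sq y +
    (y * Real.cos y * Real.sin y) * Real.cosh_sq_sub_sinh_sq x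

theorem re_div_pos_of_re_mul_conj_pos {x y : ℂ} (h : 0 < (x * conj y).re) : 0 < (x / y).re := by
  have hy : y ≠ 0 := by rintro rfl; simp at h
  rw [div_re, ← add_div]
  refine div_pos ?_ (normSq_pos.2 hy)
  simpa [mul_re] using h

theorem re_div_tanh_pos {w : ℂ} (hre : 0 < w.re) (him : |w.im| = w.re) :
    0 < (w / tanh w).re := by
  have him_term : w.im * (Real.cos w.im * Real.sin w.im)
      = w.re * (Real.cos w.re * Real.sin w.re) := by
    rcases abs_choice w.im with h | h <;> rw [h] at him <;> rw [← him]
    simp only [Real.cos_neg, Real.sin_neg]; ring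
  rw [tanh_eq_sinh_div_cosh, div_div_eq_mul_div]
  apply re_div_pos_of_re_mul_conj_pos
  rw [re_mul_cosh_mul_conj_sinh, him_term, ← mul_add]
  exact mul_pos hre (Real.cosh_mul_sinh_add_cos_mul_sin_pos hre)

theorem cpow_inv_two_re_eq_abs_im {x : ℂ} (hx : x.re = 0) :
    (x ^ (2⁻¹ : ℂ)).re = |(x ^ (2⁻¹ : ℂ)).im| := by
  rw [cpow_inv_two_re, abs_cpow_inv_two_im, hx, add_zero, sub_zero]

theorem cpow_inv_two_re_pos {x : ℂ} (hre : 0 ≤ x.re) (hx : x ≠ 0) : 0 < (x ^ (2⁻¹ : ℂ)).re := by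
  rw [cpow_inv_two_re]
  have hnorm : 0 < ‖x‖ := norm_pos_iff.2 hx
  positivity

theorem cpow_inv_two_ofReal_sq_mul {r : ℝ} (hr : 0 < r) {x : ℂ} (hx : 0 < (x ^ (2⁻¹ : ℂ)).re) :
    ((r : ℂ) ^ 2 * x) ^ (2⁻¹ : ℂ) = r * x ^ (2⁻¹ : ℂ) := by
  have hsq : (r : ℂ) ^ 2 * x = (r * x ^ (2⁻¹ : ℂ)) ^ 2 := by rw [mul_pow, cpow_ofNat_inv_pow]
  rw [hsq, sq_cpow_two_inv (by rw [re_ofReal_mul]; exact mul_pos hr hx)]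

end Complex

/-- for a > 0, cosh a · sinh a + cos a · sin a > 0; consequently
Re p₁(is) > 0 for all β > 0 and s ≠ 0. -/
theorem cosh_sinh_add_cos_sin_pos_and_re_p1_pos :
    (∀ a : ℝ, 0 < a → 0 < Real.cosh a * Real.sinh a + Real.cos a * Real.sin a)
      ∧ ∀ (β s : ℝ), 0 < β → s ≠ 0 → 0 < (p1 β (Complex.I * (s : ℂ))).re := by
  refine ⟨fun a ha => Real.cosh_mul_sinh_add_cos_mul_sin_pos ha, fun β s hβ hs => ?_⟩
  set x : ℂ := I * s / β
  have hx_re : x.re = 0 := by simp [x]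
  have hx : x ≠ 0 := by simp [x, hs, hβ.ne']
  have hv : 0 < (x ^ (2⁻¹ : ℂ)).re := cpow_inv_two_re_pos hx_re.ge hx
  have hp1 : p1 β (I * s) = β * (x ^ (2⁻¹ : ℂ) / tanh (x ^ (2⁻¹ : ℂ))) := by
    have hβx : I * s * β = (β : ℂ) ^ 2 * x := by
      simp only [x]; field_simp [ofReal_ne_zero.2 hβ.ne']
    rw [p1, one_div, hβx, cpow_inv_two_ofReal_sq_mul hβ hv, mul_div_assoc]
  rw [hp1, re_ofReal_mul]
  exact mul_pos hβ (re_div_tanh_pos hv (cpow_inv_two_re_eq_abs_im hx_re).symm)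
end

section
/- For every a > 0, (cosh a · sinh a + cos a · sin a)² − (cos a · sinh a + cosh a · sin a)² = (sinh²a − sin²a)(sinh²a + sin²a); consequently, for β > 0 and s ≠ 0, (Re p₁(is))² − (Re p₂(is))² = (β|s|/2)·(sinh²a − sin²a)/(sinh²a + sin²a) > 0 where a = √(|s|/(2β)). -/
open Complex

/-!
For `β > 0` the principal square roots in `p1 β (is)`, `p2 β (is)` are `β c` and `c` with
`c = a (1 ± i)`, the root of positive real part. Expanding `sinh` and `cosh` at `a ± a i` gives
`Re p₁(is)` and `Re p₂(is)`; by `cosh² − sinh² = 1 = cos² + sin²` their squares differ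
by `β²a² (sinh²a − sin²a) / (sinh²a + sin²a)`, positive as `|sin a| < |a| < |sinh a|`.
-/

namespace Real

theorem cosh_sinh_cos_sin_sq_sub_sq (a : ℝ) :
    (cosh a * sinh a + cos a * sin a) ^ 2 - (cos a * sinh a + cosh a * sin a) ^ 2
      = (sinh a ^ 2 - sin a ^ 2) * (sinh a ^ 2 + sin a ^ 2) := by
  linear_combination (sinh a ^ 2 - sin a ^ 2) * (cosh_sq a - sin_sq_add_cos_sq a)

theorem sin_sq_lt_sinh_sq {a : ℝ} (ha : a ≠ 0) : sin a ^ 2 < sinh a ^ 2 := by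
  have h : a ^ 2 < sinh a ^ 2 := by
    rw [← sq_abs a, ← sq_abs (sinh a), abs_sinh]
    exact pow_lt_pow_left₀ (self_lt_sinh_iff.2 (abs_pos.2 ha)) (abs_nonneg a) two_ne_zero
  exact (sin_sq_lt_sq ha).trans h

end Real

namespace Complex

theorem sinh_add_mul_I (x y : ℝ) :
    sinh (x + y * I) = (Real.sinh x * Real.cos y : ℝ) + (Real.cosh x * Real.sin y : ℝ) * I := by
  rw [sinh_add, sinh_mul_I, cosh_mul_I]
  push_cast
  ring

theorem cosh_add_mul_I (x y : ℝ) :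
    cosh (x + y * I) = (Real.cosh x * Real.cos y : ℝ) + (Real.sinh x * Real.sin y : ℝ) * I := by
  rw [cosh_add, sinh_mul_I, cosh_mul_I]
  push_cast
  ring

theorem normSq_sinh_add_mul_I (x y : ℝ) :
    normSq (sinh (x + y * I)) = Real.sinh x ^ 2 + Real.sin y ^ 2 := by
  rw [sinh_add_mul_I, normSq_add_mul_I]
  linear_combination Real.sin y ^ 2 * Real.cosh_sq x + Real.sinh x ^ 2 * Real.cos_sq_add_sin_sq y

end Complex

namespace Complex

theorem re_div_tanh_add_mul_I (x y : ℝ) :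
    ((x + y * I) / tanh (x + y * I)).re
      = (x * (Real.sinh x * Real.cosh x) + y * (Real.sin y * Real.cos y))
          / (Real.sinh x ^ 2 + Real.sin y ^ 2) := by
  rw [tanh_eq_sinh_div_cosh, div_div_eq_mul_div, div_re, normSq_sinh_add_mul_I, ← add_div,
    sinh_add_mul_I, cosh_add_mul_I]
  congr 1
  simp only [mul_re, mul_im, add_re, add_im, ofReal_re, ofReal_im, I_re, I_im, mul_zero,
    mul_one, zero_add, add_zero, sub_self]
  linear_combination (x * Real.sinh x * Real.cosh x) * Real.cos_sq_add_sin_sq y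
    + (y * Real.sin y * Real.cos y) * Real.cosh_sq_sub_sinh_sq x

theorem re_div_sinh_add_mul_I (x y : ℝ) :
    ((x + y * I) / sinh (x + y * I)).re
      = (x * (Real.sinh x * Real.cos y) + y * (Real.cosh x * Real.sin y))
          / (Real.sinh x ^ 2 + Real.sin y ^ 2) := by
  rw [div_re, normSq_sinh_add_mul_I, ← add_div, sinh_add_mul_I]
  simp only [mul_re, mul_im, add_re, add_im, ofReal_re, ofReal_im, I_re, I_im, mul_zero,
    mul_one, zero_add, add_zero, sub_zero]

theorem cpow_one_div_two_eq {c u : ℂ} (hc : 0 < c.re) (hcu : c ^ 2 = u) :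
    u ^ ((1 : ℂ) / 2) = c := by
  rw [one_div, ← hcu, sq_cpow_two_inv hc]

theorem cpow_one_div_two_mul_ofReal {β : ℝ} (hβ : 0 < β) {z c : ℂ} (hc : 0 < c.re)
    (hcz : c ^ 2 = z / β) : (z * β) ^ ((1 : ℂ) / 2) = β * c := by
  refine cpow_one_div_two_eq (by simpa using mul_pos hβ hc) ?_
  rw [mul_pow, hcz]
  field_simp [ofReal_ne_zero.2 hβ.ne']

end Complex

theorem p1_eq_of_sq_eq {β : ℝ} (hβ : 0 < β) {z c : ℂ} (hc : 0 < c.re)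
    (hcz : c ^ 2 = z / β) :
    p1 β z = β * (c / tanh c) := by
  rw [p1, cpow_one_div_two_eq hc hcz, cpow_one_div_two_mul_ofReal hβ hc hcz, mul_div_assoc]

theorem p2_eq_of_sq_eq {β : ℝ} (hβ : 0 < β) {z c : ℂ} (hc : 0 < c.re)
    (hcz : c ^ 2 = z / β) :
    p2 β z = -β * (c / sinh c) := by
  rw [p2, cpow_one_div_two_eq hc hcz, cpow_one_div_two_mul_ofReal hβ hc hcz, neg_mul, neg_div,
    mul_div_assoc]

theorem exists_sq_eq_I_mul_div {β s a : ℝ} (hβ : β ≠ 0) (has : 2 * β * a ^ 2 = |s|) :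
    ∃ y : ℝ, (y = a ∨ y = -a) ∧ ((a : ℂ) + y * I) ^ 2 = I * s / β := by
  have has' : 2 * (β : ℂ) * (a : ℂ) ^ 2 = (|s| : ℝ) := by exact_mod_cast has
  rcases abs_choice s with hs | hs
  · refine ⟨a, .inl rfl, ?_⟩
    rw [hs] at has'
    rw [eq_div_iff (ofReal_ne_zero.2 hβ)]
    linear_combination I * has' + β * a ^ 2 * I_sq
  · refine ⟨-a, .inr rfl, ?_⟩
    rw [hs, ofReal_neg] at has'
    rw [eq_div_iff (ofReal_ne_zero.2 hβ), ofReal_neg]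
    linear_combination -I * has' + β * a ^ 2 * I_sq

theorem re_p1_I_mul {β s a : ℝ} (hβ : 0 < β) (ha : 0 < a) (has : 2 * β * a ^ 2 = |s|) :
    (p1 β (I * s)).re
      = β * a * (Real.cosh a * Real.sinh a + Real.cos a * Real.sin a)
          / (Real.sinh a ^ 2 + Real.sin a ^ 2) := by
  obtain ⟨y, hy, hc⟩ := exists_sq_eq_I_mul_div hβ.ne' has
  rw [p1_eq_of_sq_eq hβ (by simpa using ha) hc, re_ofReal_mul, re_div_tanh_add_mul_I]
  rcases hy with rfl | rfl
  · ring
  · rw [Real.sin_neg, Real.cos_neg]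
    ring

theorem re_p2_I_mul {β s a : ℝ} (hβ : 0 < β) (ha : 0 < a) (has : 2 * β * a ^ 2 = |s|) :
    (p2 β (I * s)).re
      = -(β * a * (Real.cos a * Real.sinh a + Real.cosh a * Real.sin a))
          / (Real.sinh a ^ 2 + Real.sin a ^ 2) := by
  obtain ⟨y, hy, hc⟩ := exists_sq_eq_I_mul_div hβ.ne' has
  rw [p2_eq_of_sq_eq hβ (by simpa using ha) hc, ← ofReal_neg, re_ofReal_mul,
    re_div_sinh_add_mul_I]
  rcases hy with rfl | rfl
  · ring
  · rw [Real.sin_neg, Real.cos_neg]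
    ring

/-- the hyperbolic/trigonometric identity
(cosh a sinh a + cos a sin a)² − (cos a sinh a + cosh a sin a)² =
(sinh²a − sin²a)(sinh²a + sin²a) for a > 0, and consequently
(Re p₁(is))² − (Re p₂(is))² = (β|s|/2)(sinh²a − sin²a)/(sinh²a + sin²a) > 0
with a = √(|s|/(2β)). -/
theorem re_p1_sq_sub_re_p2_sq :
    (∀ a : ℝ, 0 < a →
      (Real.cosh a * Real.sinh a + Real.cos a * Real.sin a) ^ 2
          - (Real.cos a * Real.sinh a + Real.cosh a * Real.sin a) ^ 2
        = (Real.sinh a ^ 2 - Real.sin a ^ 2) * (Real.sinh a ^ 2 + Real.sin a ^ 2))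
    ∧ ∀ (β s : ℝ), 0 < β → s ≠ 0 →
        (p1 β (Complex.I * (s : ℂ))).re ^ 2 - (p2 β (Complex.I * (s : ℂ))).re ^ 2
            = β * |s| / 2
                * ((Real.sinh (Real.sqrt (|s| / (2 * β))) ^ 2
                      - Real.sin (Real.sqrt (|s| / (2 * β))) ^ 2)
                    / (Real.sinh (Real.sqrt (|s| / (2 * β))) ^ 2
                        + Real.sin (Real.sqrt (|s| / (2 * β))) ^ 2))
          ∧ 0 < (p1 β (Complex.I * (s : ℂ))).re ^ 2
                  - (p2 β (Complex.I * (s : ℂ))).re ^ 2 := by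
  refine ⟨fun a _ ↦ Real.cosh_sinh_cos_sin_sq_sub_sq a, fun β s hβ hs ↦ ?_⟩
  set a := √(|s| / (2 * β))
  have ha : 0 < a := Real.sqrt_pos.2 (by positivity)
  have has : 2 * β * a ^ 2 = |s| := by
    rw [Real.sq_sqrt (by positivity)]
    field_simp
  have hsin : Real.sin a ^ 2 < Real.sinh a ^ 2 := Real.sin_sq_lt_sinh_sq ha.ne'
  have hD : 0 < Real.sinh a ^ 2 + Real.sin a ^ 2 := by positivity
  have hdiff : (p1 β (I * s)).re ^ 2 - (p2 β (I * s)).re ^ 2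
      = β * |s| / 2
          * ((Real.sinh a ^ 2 - Real.sin a ^ 2) / (Real.sinh a ^ 2 + Real.sin a ^ 2)) := by
    rw [re_p1_I_mul hβ ha has, re_p2_I_mul hβ ha has, ← has]
    field_simp
    linear_combination Real.cosh_sinh_cos_sin_sq_sub_sq a
  exact ⟨hdiff, hdiff ▸ mul_pos (by positivity) (div_pos (sub_pos.2 hsin) hD)⟩
end

section
/- Let A₀ be the operator on L²(0,1)² given by A₀(u,v) = (v', u') with domain {(u,v) ∈ H¹(0,1)² : v(0) = 0, u(1) + v(1) = 0}. Then for every λ ∈ ℂ with Re λ ≥ 0, the only solution (u,v) ∈ D(A₀) of λ(u,v) = (v',u') is (u,v) = (0,0); i.e., A₀ − λ is injective on the closed right half-plane. -/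
open Set

/- Multiplying by `exp (-c x)` turns `f' = c • f` into a function with zero derivative. -/
theorem eqOn_zero_of_hasDerivAt_eq_smul {E : Type*} [NormedAddCommGroup E] [NormedSpace ℂ E]
    {f : ℝ → E} {c : ℂ} {a b t : ℝ} (hf : ∀ x ∈ Icc a b, HasDerivAt f (c • f x) x)
    (ht : t ∈ Icc a b) (hft : f t = 0) : EqOn f 0 (Icc a b) := by
  set g : ℝ → E := fun x => Complex.exp (-c * x) • f x
  have hexp (x : ℝ) :
      HasDerivAt (fun y : ℝ => Complex.exp (-c * y)) (Complex.exp (-c * x) * -c) x := by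
    simpa using ((Complex.ofRealCLM.hasDerivAt (x := x)).const_mul (-c)).cexp
  have hg (x) (hx : x ∈ Icc a b) : HasDerivAt g 0 x := by
    refine ((hexp x).smul (hf x hx)).congr_deriv ?_
    rw [smul_smul, ← add_smul, mul_neg, add_neg_cancel, zero_smul]
  have hconst : ∀ x ∈ Icc a b, g x = g a :=
    constant_of_has_deriv_right_zero (fun x hx => (hg x hx).continuousAt.continuousWithinAt)
      fun x hx => (hg x (Ico_subset_Icc_self hx)).hasDerivWithinAt
  intro x hx
  have hgx : g x = 0 := by rw [hconst x hx, ← hconst t ht]; simp [g, hft]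
  simpa [g, Complex.exp_ne_zero] using hgx

theorem damped_wave_no_eigenvalues_right_half_plane_general
    (lam : ℂ) (u v u' v' : ℝ → ℂ)
    (hu : ∀ x : ℝ, HasDerivAt u (u' x) x)
    (hv : ∀ x : ℝ, HasDerivAt v (v' x) x)
    (heq1 : ∀ x ∈ Set.Icc (0:ℝ) 1, lam * u x = v' x)
    (heq2 : ∀ x ∈ Set.Icc (0:ℝ) 1, lam * v x = u' x)
    (hbc0 : v 0 = 0) (hbc1 : u 1 + v 1 = 0) :
    ∀ x ∈ Set.Icc (0:ℝ) 1, u x = 0 ∧ v x = 0 := by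
  have h0 : (0 : ℝ) ∈ Icc (0 : ℝ) 1 := by norm_num
  have h1 : (1 : ℝ) ∈ Icc (0 : ℝ) 1 := by norm_num
  -- The Riemann invariants `u + v` and `u - v` are transported by `f' = ±lam f`.
  have hsum : EqOn (u + v) 0 (Icc 0 1) := by
    refine eqOn_zero_of_hasDerivAt_eq_smul (c := lam) (fun x hx => ?_) h1 hbc1
    convert (hu x).add (hv x) using 1
    simp only [Pi.add_apply, smul_eq_mul, ← heq1 x hx, ← heq2 x hx]
    ring
  have hu0 : u 0 = 0 := by simpa [hbc0] using hsum h0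
  have hdiff : EqOn (u - v) 0 (Icc 0 1) := by
    refine eqOn_zero_of_hasDerivAt_eq_smul (c := -lam) (fun x hx => ?_) h0 (by simp [hu0, hbc0])
    convert (hu x).sub (hv x) using 1
    simp only [Pi.sub_apply, smul_eq_mul, ← heq1 x hx, ← heq2 x hx]
    ring
  intro x hx
  have hs : u x + v x = 0 := hsum hx
  have hd : u x - v x = 0 := hdiff hx
  exact ⟨by linear_combination (hs + hd) / 2, by linear_combination (hs - hd) / 2⟩

/-- the boundary-damped wave operator A₀(u,v) = (v',u') on a single edge,
with boundary conditions v(0) = 0 and u(1) + v(1) = 0, has no eigenvalues in the closed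
right half-plane: if Re λ ≥ 0 and λu = v', λv = u' on [0,1] with these boundary
conditions, then u = v = 0 on [0,1]. -/
theorem damped_wave_no_eigenvalues_right_half_plane
    (lam : ℂ) (hlam : 0 ≤ lam.re) (u v u' v' : ℝ → ℂ)
    (hu : ∀ x : ℝ, HasDerivAt u (u' x) x)
    (hv : ∀ x : ℝ, HasDerivAt v (v' x) x)
    (heq1 : ∀ x ∈ Set.Icc (0:ℝ) 1, lam * u x = v' x)
    (heq2 : ∀ x ∈ Set.Icc (0:ℝ) 1, lam * v x = u' x)
    (hbc0 : v 0 = 0) (hbc1 : u 1 + v 1 = 0) :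
    ∀ x ∈ Set.Icc (0:ℝ) 1, u x = 0 ∧ v x = 0 :=
  damped_wave_no_eigenvalues_right_half_plane_general lam u v u' v' hu hv heq1 heq2 hbc0 hbc1
end
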